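/- For generic q and |zw| < 1, the pairing of the boundary vector ⟨η_1| with a monomial in q-boson operators is ⟨η_1| z^h (a⁺)^j k^m w^h |η_1⟩ = z^j (−q;q)_j (−q^{j+m+1}zw; q)_∞ / (q^m zw; q)_∞, where ⟨η_1| = Σ_{m≥0} ⟨m|/(q;q)_m, |η_1⟩ = Σ_{m≥0} |m⟩/(q;q)_m, ⟨m|m'⟩ = (q²;q²)_m δ_{m,m'}, and h is the number operator. -/

import Mathlib

noncomputable section

/-- The finite q-Pochhammer symbol `(q;q)_m = ∏_{j=1}^m (1 - q^j)`. -/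
def qpoch (q : ℂ) (m : ℕ) : ℂ := ∏ j ∈ Finset.range m, (1 - q ^ (j + 1))

/-- `a⁺` on the completed Fock space (coefficient-wise). -/
def aP (v : ℕ → ℂ) : ℕ → ℂ := fun m => match m with
  | 0 => 0
  | Nat.succ l => v l

/-- `z^h`: `(z^h v)_m = z^m v_m`. -/
def zh (z : ℂ) (v : ℕ → ℂ) : ℕ → ℂ := fun m => z ^ m * v m

/-- `k^m`: `(k^m v)_l = q^{lm} v_l`. -/
def kPow (q : ℂ) (m : ℕ) (v : ℕ → ℂ) : ℕ → ℂ := fun l => q ^ (l * m) * v l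

/-- The boundary vector `|η_1⟩ = Σ_{m ≥ 0} |m⟩/(q;q)_m`. -/
def eta1 (q : ℂ) : ℕ → ℂ := fun m => (qpoch q m)⁻¹

/-- The pairing `⟨η_1| v` where `⟨η_1| = Σ_m ⟨m|/(q;q)_m` and `⟨m|m'⟩ = (q²;q²)_m δ_{m,m'}`. -/
def braEta1 (q : ℂ) (v : ℕ → ℂ) : ℂ := ∑' m : ℕ, (qpoch (q ^ 2) m / qpoch q m) * v m

/-! Only the terms `n = l + j` of the pairing survive, and since
`(q²;q²)_n / (q;q)_n = (-q;q)_n` they add up to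
`z^j (-q;q)_j ∑_l (-q^{j+1};q)_l / (q;q)_l (q^m z w)^l`. This is summed by the q-binomial theorem
`F(x) := ∑ (a;q)_n / (q;q)_n x^n = (a x;q)_∞ / (x;q)_∞`: comparing coefficients gives
`(1 - x) F(x) = (1 - a x) F(q x)`, so `(x;q)_N F(x) = (a x;q)_N F(q^N x)`, and `F(q^N x) → F(0) = 1`. -/

open Filter Finset Topology

/-- `(a;q)_n` -/
def qPochhammer (a q : ℂ) (n : ℕ) : ℂ := ∏ i ∈ range n, (1 - a * q ^ i)

/-- `(a;q)_∞` -/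
def qPochhammerInf (a q : ℂ) : ℂ := ∏' i : ℕ, (1 - a * q ^ i)

def qBinomialCoeff (a q : ℂ) (n : ℕ) : ℂ := qPochhammer a q n / qpoch q n

def qBinomialSeries (a q x : ℂ) : ℂ := ∑' n : ℕ, qBinomialCoeff a q n * x ^ n

lemma summable_norm_of_succ_eq_mul {𝕜 : Type*} [NormedRing 𝕜] {f g : ℕ → 𝕜} {c : 𝕜}
    (hf : ∀ n, f (n + 1) = g n * f n) (hg : Tendsto g atTop (𝓝 c)) (hc : ‖c‖ < 1) :
    Summable fun n ↦ ‖f n‖ := by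
  obtain ⟨r, hcr, hr1⟩ := exists_between hc
  refine summable_of_ratio_norm_eventually_le hr1 ?_
  filter_upwards [hg.norm.eventually (gt_mem_nhds hcr)] with n hn
  simp only [norm_norm, hf]
  exact (norm_mul_le _ _).trans (mul_le_mul_of_nonneg_right hn.le (norm_nonneg _))

variable {a q x : ℂ}

lemma norm_pow_mul_le (hq : ‖q‖ < 1) (n : ℕ) : ‖q ^ n * x‖ ≤ ‖x‖ := by
  rw [norm_mul, norm_pow]
  exact mul_le_of_le_one_left (norm_nonneg x) (pow_le_one₀ (norm_nonneg q) hq.le)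

lemma one_sub_ne_zero_of_norm_lt_one (hx : ‖x‖ < 1) : 1 - x ≠ 0 := by
  rw [sub_ne_zero]
  rintro rfl
  simp at hx

lemma one_sub_pow_ne_zero (hq : ‖q‖ < 1) {n : ℕ} (hn : n ≠ 0) : 1 - q ^ n ≠ 0 :=
  one_sub_ne_zero_of_norm_lt_one (by rw [norm_pow]; exact pow_lt_one₀ (norm_nonneg q) hq hn)

lemma qpoch_ne_zero (hq : ‖q‖ < 1) (n : ℕ) : qpoch q n ≠ 0 :=
  prod_ne_zero_iff.2 fun _ _ ↦ one_sub_pow_ne_zero hq (Nat.succ_ne_zero _)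

lemma qpoch_sq (q : ℂ) (n : ℕ) :
    qpoch (q ^ 2) n = qpoch q n * ∏ i ∈ range n, (1 + q ^ (i + 1)) := by
  rw [qpoch, qpoch, ← prod_mul_distrib]
  exact prod_congr rfl fun i _ ↦ by ring

lemma summable_norm_mul_pow (hq : ‖q‖ < 1) (a : ℂ) : Summable fun i : ℕ ↦ ‖a * q ^ i‖ := by
  simpa only [norm_mul, norm_pow] using
    (summable_geometric_of_lt_one (norm_nonneg q) hq).mul_left ‖a‖

lemma multipliable_one_sub_mul_pow (hq : ‖q‖ < 1) (a : ℂ) :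
    Multipliable fun i : ℕ ↦ 1 - a * q ^ i := by
  simpa only [sub_eq_add_neg] using
    multipliable_one_add_of_summable (f := fun i : ℕ ↦ -(a * q ^ i))
      (by simpa only [norm_neg] using summable_norm_mul_pow hq a)

lemma tendsto_qPochhammer (hq : ‖q‖ < 1) (a : ℂ) :
    Tendsto (qPochhammer a q) atTop (𝓝 (qPochhammerInf a q)) :=
  (multipliable_one_sub_mul_pow hq a).hasProd.tendsto_prod_nat

lemma qPochhammerInf_ne_zero (hq : ‖q‖ < 1) (ha : ‖a‖ < 1) : qPochhammerInf a q ≠ 0 := by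
  simpa only [qPochhammerInf, sub_eq_add_neg] using
    tprod_one_add_ne_zero_of_summable (f := fun i : ℕ ↦ -(a * q ^ i))
      (fun i ↦ by simpa only [← sub_eq_add_neg] using
        one_sub_ne_zero_of_norm_lt_one (mul_comm a _ ▸ (norm_pow_mul_le hq i).trans_lt ha))
      (by simpa only [norm_neg] using summable_norm_mul_pow hq a)

lemma qBinomialCoeff_zero (a q : ℂ) : qBinomialCoeff a q 0 = 1 := by
  simp [qBinomialCoeff, qPochhammer, qpoch]

lemma qBinomialCoeff_succ (hq : ‖q‖ < 1) (n : ℕ) :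
    qBinomialCoeff a q (n + 1) = (1 - a * q ^ n) / (1 - q ^ (n + 1)) * qBinomialCoeff a q n := by
  have := one_sub_pow_ne_zero hq n.succ_ne_zero
  have := qpoch_ne_zero hq n
  simp only [qBinomialCoeff, qPochhammer, qpoch, prod_range_succ] at *
  field_simp

lemma summable_norm_qBinomial_term (hq : ‖q‖ < 1) (hx : ‖x‖ < 1) :
    Summable fun n ↦ ‖qBinomialCoeff a q n * x ^ n‖ := by
  refine summable_norm_of_succ_eq_mul
    (g := fun n ↦ (1 - a * q ^ n) / (1 - q ^ (n + 1)) * x) (fun n ↦ ?_) ?_ hx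
  · rw [qBinomialCoeff_succ hq, pow_succ]
    ring
  · have h0 := tendsto_pow_atTop_nhds_zero_of_norm_lt_one hq
    have h1 := (tendsto_add_atTop_iff_nat 1).mpr h0
    simpa using (((tendsto_const_nhds (x := (1 : ℂ))).sub (h0.const_mul a)).div
      (tendsto_const_nhds.sub h1) (by norm_num : (1 : ℂ) - 0 ≠ 0)).mul_const x

lemma hasSum_qBinomialSeries (hq : ‖q‖ < 1) (hx : ‖x‖ < 1) :
    HasSum (fun n ↦ qBinomialCoeff a q n * x ^ n) (qBinomialSeries a q x) :=
  (summable_norm_qBinomial_term hq hx).of_norm.hasSum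

lemma qBinomialSeries_functional_eq (hq : ‖q‖ < 1) (hx : ‖x‖ < 1) :
    (1 - x) * qBinomialSeries a q x = (1 - a * x) * qBinomialSeries a q (q * x) := by
  have hqx : ‖q * x‖ < 1 := by simpa using (norm_pow_mul_le (x := x) hq 1).trans_lt hx
  have hdiff := (hasSum_qBinomialSeries (a := a) hq hx).sub (hasSum_qBinomialSeries (a := a) hq hqx)
  have hshift := (hasSum_nat_add_iff' 1).mpr hdiff
  have hrec : HasSum (fun n ↦ x * (qBinomialCoeff a q n * x ^ n)
      - a * x * (qBinomialCoeff a q n * (q * x) ^ n))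
      (x * qBinomialSeries a q x - a * x * qBinomialSeries a q (q * x)) :=
    ((hasSum_qBinomialSeries hq hx).mul_left x).sub
      ((hasSum_qBinomialSeries hq hqx).mul_left (a * x))
  have hterm : ∀ n : ℕ, qBinomialCoeff a q (n + 1) * x ^ (n + 1)
      - qBinomialCoeff a q (n + 1) * (q * x) ^ (n + 1)
      = x * (qBinomialCoeff a q n * x ^ n) - a * x * (qBinomialCoeff a q n * (q * x) ^ n) := by
    intro n
    have := one_sub_pow_ne_zero hq n.succ_ne_zero
    rw [qBinomialCoeff_succ hq]
    field_simp
    ring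
  have := hshift.unique (hrec.congr_fun hterm)
  simp only [range_one, sum_singleton, pow_zero, sub_self, sub_zero] at this
  linear_combination this

lemma qPochhammer_mul_qBinomialSeries (hq : ‖q‖ < 1) (hx : ‖x‖ < 1) (N : ℕ) :
    qPochhammer x q N * qBinomialSeries a q x
      = qPochhammer (a * x) q N * qBinomialSeries a q (q ^ N * x) := by
  induction N with
  | zero => simp [qPochhammer]
  | succ N ih =>
    have hfe := qBinomialSeries_functional_eq (a := a) hq ((norm_pow_mul_le hq N).trans_lt hx)
    rw [show q * (q ^ N * x) = q ^ (N + 1) * x by ring] at hfe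
    simp only [qPochhammer, prod_range_succ] at ih ⊢
    linear_combination (1 - x * q ^ N) * ih + (∏ i ∈ range N, (1 - a * x * q ^ i)) * hfe

lemma tendsto_qBinomialSeries_pow_mul (hq : ‖q‖ < 1) (hx : ‖x‖ < 1) :
    Tendsto (fun N : ℕ ↦ qBinomialSeries a q (q ^ N * x)) atTop (𝓝 1) := by
  have hlim : Tendsto (fun N : ℕ ↦ q ^ N * x) atTop (𝓝 0) := by
    simpa using (tendsto_pow_atTop_nhds_zero_of_norm_lt_one hq).mul_const x
  have h := tendsto_tsum_of_dominated_convergence (summable_norm_qBinomial_term (a := a) hq hx)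
    (fun n ↦ (hlim.pow n).const_mul (qBinomialCoeff a q n)) (Eventually.of_forall fun N n ↦ by
      rw [norm_mul, norm_mul, norm_pow, norm_pow]
      gcongr
      exact norm_pow_mul_le hq N)
  rwa [tsum_eq_single 0 fun n hn ↦ by simp [hn], qBinomialCoeff_zero, pow_zero, mul_one] at h

theorem qBinomialSeries_mul_qPochhammerInf (hq : ‖q‖ < 1) (hx : ‖x‖ < 1) :
    qBinomialSeries a q x * qPochhammerInf x q = qPochhammerInf (a * x) q := by
  have hL := (tendsto_qPochhammer hq x).mul_const (qBinomialSeries a q x)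
  have hR := (tendsto_qPochhammer hq (a * x)).mul (tendsto_qBinomialSeries_pow_mul (a := a) hq hx)
  simp only [qPochhammer_mul_qBinomialSeries hq hx, mul_one] at hL hR
  rw [mul_comm]
  exact tendsto_nhds_unique hL hR

theorem hasSum_qBinomial (hq : ‖q‖ < 1) (hx : ‖x‖ < 1) :
    HasSum (fun n ↦ qBinomialCoeff a q n * x ^ n) (qPochhammerInf (a * x) q / qPochhammerInf x q) := by
  rw [← qBinomialSeries_mul_qPochhammerInf hq hx,
    mul_div_cancel_right₀ _ (qPochhammerInf_ne_zero hq hx)]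
  exact hasSum_qBinomialSeries hq hx

lemma aP_iterate_apply_add (u : ℕ → ℂ) (j l : ℕ) : aP^[j] u (l + j) = u l := by
  induction j with
  | zero => rfl
  | succ j ih => rw [Function.iterate_succ_apply']; exact ih

lemma aP_iterate_apply_of_lt (u : ℕ → ℂ) {j n : ℕ} (h : n < j) : aP^[j] u n = 0 := by
  induction j generalizing n with
  | zero => omega
  | succ j ih =>
    rw [Function.iterate_succ_apply']
    cases n with
    | zero => rfl
    | succ n => exact ih (by omega)

lemma braEta1_term_add (hq : ‖q‖ < 1) (z w : ℂ) (j m l : ℕ) :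
    qpoch (q ^ 2) (l + j) / qpoch q (l + j) * zh z (aP^[j] (kPow q m (zh w (eta1 q)))) (l + j)
      = z ^ j * (∏ i ∈ range j, (1 + q ^ (i + 1)))
        * (qBinomialCoeff (-q ^ (j + 1)) q l * (q ^ m * (z * w)) ^ l) := by
  have hpoch : qPochhammer (-q ^ (j + 1)) q l = ∏ i ∈ range l, (1 + q ^ (j + i + 1)) :=
    prod_congr rfl fun i _ ↦ by ring
  have := qpoch_ne_zero hq l
  rw [zh, aP_iterate_apply_add, kPow, zh, eta1, qpoch_sq, mul_div_right_comm,
    div_self (qpoch_ne_zero hq _), one_mul, add_comm l j, prod_range_add,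
    qBinomialCoeff, hpoch]
  field_simp
  ring

/-- `⟨η_1| z^h (a⁺)^j k^m w^h |η_1⟩ = z^j (-q;q)_j (-q^{j+m+1}zw;q)_∞ / (q^m zw;q)_∞`. -/
theorem stmt9 (q z w : ℂ) (j m : ℕ) (hq : ‖q‖ < 1) (hzw : ‖z * w‖ < 1) :
    braEta1 q (zh z (aP^[j] (kPow q m (zh w (eta1 q))))) =
      z ^ j * (∏ i ∈ Finset.range j, (1 + q ^ (i + 1))) *
        (∏' i : ℕ, (1 + q ^ (j + m + 1 + i) * (z * w))) /
        (∏' i : ℕ, (1 - q ^ (m + i) * (z * w))) := by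
  have hx : ‖q ^ m * (z * w)‖ < 1 := (norm_pow_mul_le hq m).trans_lt hzw
  have hnum : ∏' i : ℕ, (1 + q ^ (j + m + 1 + i) * (z * w))
      = qPochhammerInf (-q ^ (j + 1) * (q ^ m * (z * w))) q :=
    tprod_congr fun i ↦ by ring
  have hden : ∏' i : ℕ, (1 - q ^ (m + i) * (z * w)) = qPochhammerInf (q ^ m * (z * w)) q :=
    tprod_congr fun i ↦ by ring
  refine HasSum.tsum_eq ?_
  rw [← hasSum_nat_add_iff' j,
    sum_eq_zero fun n hn ↦ by rw [zh, aP_iterate_apply_of_lt _ (mem_range.mp hn), mul_zero, mul_zero],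
    sub_zero, hnum, hden, mul_div_assoc]
  simpa only [braEta1_term_add hq] using (hasSum_qBinomial hq hx).mul_left _
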